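/- For all distinct positive real numbers a and b, L(I(a,b), G(a,b)) < L(a,b). -/

import Mathlib

noncomputable def G (a b : ℝ) : ℝ := Real.sqrt (a * b)
noncomputable def L (a b : ℝ) : ℝ := (a - b) / (Real.log a - Real.log b)
noncomputable def I (a b : ℝ) : ℝ := (1 / Real.exp 1) * (a ^ a / b ^ b) ^ (1 / (a - b))

/-!
Put `g = G(a,b)` and `a = g eˣ`, `b = g e⁻ˣ` with `x ≠ 0`. Then `L(a,b) = g sinh x / x`,
`I(a,b) = g eᵘ` with `u = x coth x - 1 > 0`, and `L(I,G) = g (eᵘ - 1) / u`. Since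
`u sinh x / x = cosh x - sinh x / x`, the claim becomes `eᵘ < 1 + cosh x - sinh x / x`, which is
Alzer's inequality `L + I < A + G`. For `x > 0` the function
`log (1 + cosh x - sinh x / x) - u` tends to `0` at `0⁺`, and its derivative is
`(sinh x - x) P(x) / (x sinh² x (x (1 + cosh x) - sinh x))` with
`P(x) = sinh² x + x sinh x - x² (1 + cosh x)`. Positivity of `P` is the delicate point (the
difference vanishes to sixth order at `0`); it follows at the half angle from the Taylor-type bounds
`sinh h > h + h³/6` and `tanh h > h - h³/3`.
-/

open Real Set Filter Topology

lemma pos_of_hasDerivAt_of_pos {f f' : ℝ → ℝ} (hf : ∀ y, HasDerivAt f (f' y) y)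
    (h0 : f 0 = 0) (hf' : ∀ y, 0 < y → 0 < f' y) {x : ℝ} (hx : 0 < x) : 0 < f x := by
  have hmono : StrictMonoOn f (Ici 0) :=
    strictMonoOn_of_hasDerivWithinAt_pos (convex_Ici 0)
      (fun y _ ↦ (hf y).continuousAt.continuousWithinAt)
      (fun y _ ↦ (hf y).hasDerivWithinAt) (fun y hy ↦ hf' y (by simpa using hy))
  simpa [h0] using hmono self_mem_Ici hx.le hx

namespace Real

lemma one_add_sq_div_two_lt_cosh {x : ℝ} (hx : 0 < x) : 1 + x ^ 2 / 2 < cosh x := by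
  have h := (self_lt_sinh_iff (x := x / 2)).mpr (half_pos hx)
  have hcosh : cosh x = 1 + 2 * sinh (x / 2) ^ 2 := by
    have := cosh_two_mul (x / 2)
    rw [mul_div_cancel₀ x two_ne_zero, cosh_sq] at this
    linarith
  nlinarith

lemma add_pow_three_div_six_lt_sinh {x : ℝ} (hx : 0 < x) : x + x ^ 3 / 6 < sinh x := by
  have h := pos_of_hasDerivAt_of_pos (f := fun y ↦ sinh y - (y + y ^ 3 / 6))
    (fun y ↦ ((hasDerivAt_sinh y).sub ((hasDerivAt_id y).add
      ((hasDerivAt_pow 3 y).div_const 6))).congr_deriv (by simp; ring))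
    (by simp) (fun y hy ↦ sub_pos.mpr (one_add_sq_div_two_lt_cosh hy)) hx
  linarith

lemma sinh_lt_mul_cosh {x : ℝ} (hx : 0 < x) : sinh x < x * cosh x := by
  have h := pos_of_hasDerivAt_of_pos (f := fun y ↦ y * cosh y - sinh y)
    (fun y ↦ (((hasDerivAt_id y).mul (hasDerivAt_cosh y)).sub (hasDerivAt_sinh y)).congr_deriv
      (by simp))
    (by simp) (fun y hy ↦ mul_pos hy (sinh_pos_iff.mpr hy)) hx
  linarith

lemma sub_pow_three_div_three_mul_cosh_lt_sinh {x : ℝ} (hx : 0 < x) :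
    (x - x ^ 3 / 3) * cosh x < sinh x := by
  have h := pos_of_hasDerivAt_of_pos (f := fun y ↦ sinh y - (y - y ^ 3 / 3) * cosh y)
    (f' := fun y ↦ y * (y * cosh y - sinh y) + y ^ 3 * sinh y / 3)
    (fun y ↦ ((hasDerivAt_sinh y).sub (((hasDerivAt_id y).sub
      ((hasDerivAt_pow 3 y).div_const 3)).mul (hasDerivAt_cosh y))).congr_deriv (by simp; ring))
    (by simp) (fun y hy ↦ by
      have := sinh_lt_mul_cosh hy
      have := sinh_pos_iff.mpr hy
      nlinarith [pow_pos hy 3]) hx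
  linarith

lemma sq_mul_one_add_cosh_lt {x : ℝ} (hx : 0 < x) :
    x ^ 2 * (1 + cosh x) < sinh x ^ 2 + x * sinh x := by
  set h := x / 2
  have hh : 0 < h := half_pos hx
  have hx2 : x = 2 * h := by ring
  have hS₁ := add_pow_three_div_six_lt_sinh hh
  have hS₂ := sub_pow_three_div_three_mul_cosh_lt_sinh hh
  have hC : 0 < cosh h := cosh_pos h
  -- with `S = sinh h`, `C = cosh h` the difference is `4 C (S² C + h S - 2 h² C)`, and the two
  -- bounds give `S² C + h S - 2 h² C > C ((h + h³/6)² - h² - h⁴/3) = C h⁶ / 36`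
  have hQ : 2 * h ^ 2 * cosh h < sinh h ^ 2 * cosh h + h * sinh h := by
    have hS₁' : (h + h ^ 3 / 6) ^ 2 < sinh h ^ 2 := by
      gcongr
    nlinarith [mul_lt_mul_of_pos_left hS₁' hC, mul_lt_mul_of_pos_left hS₂ hh, pow_pos hh 6]
  rw [hx2, sinh_two_mul, cosh_two_mul]
  nlinarith [mul_lt_mul_of_pos_left hQ hC, cosh_sq h]

/-- `log (1 + A - L) - log I` at `a = eˣ`, `b = e⁻ˣ`: its positivity is Alzer's inequality
`L + I < A + G`. -/
noncomputable def alzerDefect (x : ℝ) : ℝ :=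
  log (1 + cosh x - sinh x / x) - (x * cosh x / sinh x - 1)

lemma hasDerivAt_alzerDefect {x : ℝ} (hx : 0 < x) :
    HasDerivAt alzerDefect ((sinh x - x) * (sinh x ^ 2 + x * sinh x - x ^ 2 * (1 + cosh x)) /
      (x * sinh x ^ 2 * (x * (1 + cosh x) - sinh x))) x := by
  have hs : 0 < sinh x := sinh_pos_iff.mpr hx
  have hD : 0 < x * (1 + cosh x) - sinh x := by linarith [sinh_lt_mul_cosh hx]
  have hk : 1 + cosh x - sinh x / x = (x * (1 + cosh x) - sinh x) / x := by
    field_simp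
  have hlog := (((hasDerivAt_cosh x).const_add 1).fun_sub
    ((hasDerivAt_sinh x).fun_div (hasDerivAt_id' x) hx.ne')).log (by rw [hk]; positivity)
  have hcoth := ((hasDerivAt_id' x).fun_mul (hasDerivAt_cosh x)).fun_div (hasDerivAt_sinh x) hs.ne'
  refine (hlog.fun_sub (hcoth.sub_const 1)).congr_deriv ?_
  rw [hk]
  have hD' := hD.ne'
  field_simp
  linear_combination (x ^ 3 * (1 + cosh x) - 2 * x ^ 2 * sinh x) * cosh_sq x

lemma strictMonoOn_alzerDefect : StrictMonoOn alzerDefect (Ioi 0) := by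
  refine strictMonoOn_of_hasDerivWithinAt_pos (convex_Ioi 0)
    (fun x hx ↦ (hasDerivAt_alzerDefect hx).continuousAt.continuousWithinAt)
    (fun x hx ↦ (hasDerivAt_alzerDefect (interior_subset hx : 0 < x)).hasDerivWithinAt)
    (fun x hx ↦ ?_)
  have hx : 0 < x := interior_subset hx
  have hs := sinh_pos_iff.mpr hx
  have hsc := sinh_lt_mul_cosh hx
  have hP := sq_mul_one_add_cosh_lt hx
  have hxs := self_lt_sinh_iff.mpr hx
  apply div_pos <;> apply mul_pos <;> nlinarith [one_le_cosh x]

lemma tendsto_sinh_div_self : Tendsto (fun x ↦ sinh x / x) (𝓝[≠] 0) (𝓝 1) := by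
  simpa [div_eq_inv_mul] using hasDerivAt_iff_tendsto_slope_zero.mp (hasDerivAt_sinh 0)

lemma tendsto_alzerDefect : Tendsto alzerDefect (𝓝[>] 0) (𝓝 0) := by
  have hsinh := tendsto_sinh_div_self.mono_left (nhdsGT_le_nhdsNE 0)
  have hcosh : Tendsto cosh (𝓝[>] 0) (𝓝 1) := by
    simpa using continuous_cosh.continuousWithinAt.tendsto (x := 0) (s := Ioi 0)
  have hlim := (((hcosh.const_add 1).sub hsinh).log (by norm_num)).sub
    ((hcosh.div hsinh one_ne_zero).sub_const 1)
  simp only [show (1 : ℝ) + 1 - 1 = 1 by norm_num, log_one, div_one, sub_self] at hlim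
  refine hlim.congr' (eventually_nhdsWithin_of_forall fun x (hx : 0 < x) ↦ ?_)
  rw [alzerDefect, Pi.div_apply, div_div_eq_mul_div, mul_comm]

lemma alzerDefect_pos {x : ℝ} (hx : 0 < x) : 0 < alzerDefect x := by
  have hx₂ : 0 < x / 2 := half_pos hx
  have hnonneg : 0 ≤ alzerDefect (x / 2) :=
    le_of_tendsto tendsto_alzerDefect <| by
      filter_upwards [Ioo_mem_nhdsGT hx₂] with y hy
      exact (strictMonoOn_alzerDefect hy.1 hx₂ hy.2).le
  exact hnonneg.trans_lt (strictMonoOn_alzerDefect hx₂ hx (half_lt_self hx))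

lemma one_lt_mul_cosh_div_sinh {x : ℝ} (hx : x ≠ 0) : 1 < x * cosh x / sinh x := by
  wlog hpos : 0 < x generalizing x
  · simpa [neg_div_neg_eq] using this (neg_ne_zero.mpr hx) (by grind)
  rw [one_lt_div (sinh_pos_iff.mpr hpos)]
  exact sinh_lt_mul_cosh hpos

lemma exp_mul_cosh_div_sinh_sub_one_lt {x : ℝ} (hx : x ≠ 0) :
    exp (x * cosh x / sinh x - 1) < 1 + cosh x - sinh x / x := by
  wlog hpos : 0 < x generalizing x
  · simpa [neg_div_neg_eq] using this (neg_ne_zero.mpr hx) (by grind)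
  have hsx : sinh x / x < cosh x := by
    rw [div_lt_iff₀ hpos, mul_comm]
    exact sinh_lt_mul_cosh hpos
  rw [← lt_log_iff_exp_lt (by linarith [one_le_cosh x])]
  have := alzerDefect_pos hpos
  rw [alzerDefect] at this
  linarith

end Real

open Real

lemma G_comm (a b : ℝ) : G a b = G b a := by
  rw [G, G, mul_comm]

lemma G_mul_exp_half_log_div {a b : ℝ} (ha : 0 < a) (hb : 0 < b) :
    G a b * exp ((log a - log b) / 2) = a := by
  have hG : log (G a b) = (log a + log b) / 2 := by
    rw [G, log_sqrt (by positivity), log_mul ha.ne' hb.ne']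
  rw [← exp_log (show 0 < G a b by unfold G; positivity), ← exp_add, hG,
    show (log a + log b) / 2 + (log a - log b) / 2 = log a by ring, exp_log ha]

lemma L_mul_exp_mul_exp {g : ℝ} (hg : 0 < g) (u v : ℝ) :
    L (g * exp u) (g * exp v) = g * (exp u - exp v) / (u - v) := by
  rw [L, log_mul hg.ne' (exp_ne_zero u), log_mul hg.ne' (exp_ne_zero v), log_exp, log_exp]
  ring

lemma log_I {a b : ℝ} (ha : 0 < a) (hb : 0 < b) :
    log (I a b) = (a * log a - b * log b) / (a - b) - 1 := by
  have hpos : 0 < a ^ a / b ^ b := by positivity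
  rw [I, log_mul (by positivity) (by positivity), one_div, log_inv, log_exp, log_rpow hpos,
    log_div (by positivity) (by positivity), log_rpow ha, log_rpow hb]
  ring

lemma I_mul_exp_mul_exp_neg {g x : ℝ} (hg : 0 < g) (hx : x ≠ 0) :
    I (g * exp x) (g * exp (-x)) = g * exp (x * cosh x / sinh x - 1) := by
  have hI : 0 < I (g * exp x) (g * exp (-x)) := by unfold I; positivity
  have hs : exp x - exp (-x) ≠ 0 := by
    rw [sub_ne_zero, Ne, exp_eq_exp]
    grind
  have hlog : log (I (g * exp x) (g * exp (-x))) = log g + (x * cosh x / sinh x - 1) := by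
    rw [log_I (by positivity) (by positivity), log_mul hg.ne' (exp_ne_zero x),
      log_mul hg.ne' (exp_ne_zero (-x)), log_exp, log_exp, sinh_eq, cosh_eq]
    field_simp
    ring
  rw [← exp_log hI, hlog, exp_add, exp_log hg]

lemma L_I_G_lt_L_mul_exp_mul_exp_neg {g x : ℝ} (hg : 0 < g) (hx : x ≠ 0) :
    L (I (g * exp x) (g * exp (-x))) (G (g * exp x) (g * exp (-x))) <
      L (g * exp x) (g * exp (-x)) := by
  set u := x * cosh x / sinh x - 1 with hu_def
  have hu : 0 < u := sub_pos.mpr (one_lt_mul_cosh_div_sinh hx)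
  have hGg : G (g * exp x) (g * exp (-x)) = g := by
    rw [G, show g * exp x * (g * exp (-x)) = g * g by rw [exp_neg]; field_simp,
      sqrt_mul_self hg.le]
  have hLI : L (g * exp u) g = g * ((exp u - 1) / u) := by
    simpa [mul_div_assoc] using L_mul_exp_mul_exp hg u 0
  have hLab : L (g * exp x) (g * exp (-x)) = g * (sinh x / x) := by
    rw [L_mul_exp_mul_exp hg, sinh_eq]
    field_simp
    ring
  have hkey : exp u - 1 < sinh x / x * u := by
    have : sinh x / x * u = cosh x - sinh x / x := by
      have : sinh x ≠ 0 := sinh_ne_zero.mpr hx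
      rw [hu_def]
      field_simp
    linarith [exp_mul_cosh_div_sinh_sub_one_lt hx]
  rw [I_mul_exp_mul_exp_neg hg hx, hGg, hLI, hLab]
  exact mul_lt_mul_of_pos_left ((div_lt_iff₀ hu).mpr hkey) hg

theorem stmt_6 (a b : ℝ) (ha : 0 < a) (hb : 0 < b) (hab : a ≠ b) :
    L (I a b) (G a b) < L a b := by
  set x := (log a - log b) / 2
  have hx : x ≠ 0 := by
    have : log a ≠ log b := fun h ↦ hab (log_injOn_pos ha hb h)
    grind
  have hGa : G a b * exp x = a := G_mul_exp_half_log_div ha hb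
  have hGb : G a b * exp (-x) = b := by
    rw [G_comm, show -x = (log b - log a) / 2 by ring]
    exact G_mul_exp_half_log_div hb ha
  have hG : 0 < G a b := by unfold G; positivity
  simpa only [hGa, hGb] using L_I_G_lt_L_mul_exp_mul_exp_neg hG hx
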